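/- arXiv:2602.23700 — 6 statements merged into one kernel-verified Lean document; each statement's English description precedes it below -/
import Mathlib

section
/- A 0/1 matrix with the consecutive-ones property in each column (i.e., in every column, the rows containing a 1 form a contiguous interval of indices) is totally unimodular: every square submatrix has determinant 0, 1, or −1. -/
private lemma memS_mul {c d : ℤ} (hc : c = 1 ∨ c = -1)
    (hd : d ∈ ({-1, 0, 1} : Set ℤ)) : c * d ∈ ({-1, 0, 1} : Set ℤ) := by
  rcases hc with hc | hc <;> rcases hd with hd | hd | hd <;>
    simp_all <;> simp [hc, hd]

private lemma memS_of_mul {c d : ℤ} (hc : c = 1 ∨ c = -1)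
    (hd : c * d ∈ ({-1, 0, 1} : Set ℤ)) : d ∈ ({-1, 0, 1} : Set ℤ) := by
  rcases hc with hc | hc <;> subst hc <;>
    rcases hd with hd | hd | hd <;> simp_all <;> omega

private lemma key : ∀ (n : ℕ) (B : Matrix (Fin n) (Fin n) ℤ)
    (_ : ∀ i j, B i j = -1 ∨ B i j = 0 ∨ B i j = 1)
    (_ : ∀ j i i', B i j = 1 → B i' j = 1 → i = i')
    (_ : ∀ j i i', B i j = -1 → B i' j = -1 → i = i'),
    B.det ∈ ({-1, 0, 1} : Set ℤ) := by
  intro n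
  induction n with
  | zero => intro B _ _ _; simp [Matrix.det_fin_zero]
  | succ n ih =>
    intro B hpm h1 h2
    by_cases hz : ∀ j, ∑ i, B i j = 0
    · right; left
      rw [← Matrix.exists_vecMul_eq_zero_iff]
      refine ⟨(fun _ => 1), ?_, ?_⟩
      · intro h0
        have := congrFun h0 0
        simp at this
      · funext j
        simp [Matrix.vecMul, dotProduct, hz j]
    · push_neg at hz
      obtain ⟨j, hj⟩ := hz
      have hex : ∃ i0, B i0 j ≠ 0 := by
        by_contra h
        push_neg at h
        exact hj (Finset.sum_eq_zero fun i _ => h i)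
      obtain ⟨i0, hi0⟩ := hex
      have hall : ∀ i, i ≠ i0 → B i j = 0 := by
        intro i hne
        by_contra hnz
        have hsum0 : ∑ i', B i' j = 0 := by
          have hpair : ∀ i2, i2 ∉ ({i0, i} : Finset (Fin (n+1))) → B i2 j = 0 := by
            intro i2 h2m
            simp only [Finset.mem_insert, Finset.mem_singleton, not_or] at h2m
            rcases hpm i2 j with h | h | h
            · rcases hpm i0 j with g | g | g
              · exact absurd (h2 j i2 i0 h g) h2m.1
              · exact absurd g hi0
              · rcases hpm i j with f | f | f
                · exact absurd (h2 j i2 i h f) h2m.2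
                · exact absurd f hnz
                · -- B i0 j = 1 and B i j = 1 → i = i0, contra
                  exact absurd (h1 j i i0 f g) hne
            · exact h
            · rcases hpm i0 j with g | g | g
              · rcases hpm i j with f | f | f
                · exact absurd (h2 j i i0 f g) hne
                · exact absurd f hnz
                · exact absurd (h1 j i2 i h f) h2m.2
              · exact absurd g hi0
              · exact absurd (h1 j i2 i0 h g) h2m.1
          have hopp : B i0 j + B i j = 0 := by
            rcases hpm i0 j with g | g | g <;> rcases hpm i j with f | f | f <;>
              first
                | omega
                | (exact absurd (h1 j i i0 f g) hne)
                | (exact absurd (h2 j i i0 f g) hne)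
                | (exact absurd f hnz)
                | (exact absurd g hi0)
          have hne' : i0 ≠ i := fun h => hne h.symm
          calc ∑ i', B i' j = ∑ i' ∈ ({i0, i} : Finset (Fin (n+1))), B i' j :=
                (Finset.sum_subset (Finset.subset_univ _) (fun x _ hx => hpair x hx)).symm
            _ = B i0 j + B i j := Finset.sum_pair hne'
            _ = 0 := hopp
        exact hj hsum0
      -- now expand along column j
      have hval : B i0 j = 1 ∨ B i0 j = -1 := by
        rcases hpm i0 j with g | g | g
        · exact Or.inr g
        · exact absurd g hi0
        · exact Or.inl g
      rw [Matrix.det_succ_column B j,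
        Finset.sum_eq_single i0
          (fun i _ hne => by rw [hall i hne]; ring)
          (fun h => absurd (Finset.mem_univ i0) h)]
      have hpow : ((-1 : ℤ)) ^ ((i0 : ℕ) + (j : ℕ)) = 1 ∨ ((-1 : ℤ)) ^ ((i0 : ℕ) + (j : ℕ)) = -1 :=
        (Nat.even_or_odd _).imp Even.neg_one_pow Odd.neg_one_pow
      rw [mul_assoc]
      refine memS_mul hpow (memS_mul hval ?_)
      refine ih _ (fun i' j' => hpm _ _) ?_ ?_
      · intro j' i' i'' hA hB
        exact Fin.succAbove_right_injective (h1 _ _ _ hA hB)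
      · intro j' i' i'' hA hB
        exact Fin.succAbove_right_injective (h2 _ _ _ hA hB)

private def Dm (n : ℕ) : Matrix (Fin n) (Fin n) ℤ :=
  fun i i' => if i' = i then 1 else if (i' : ℕ) = (i : ℕ) + 1 then -1 else 0

private lemma det_Dm (n : ℕ) : (Dm n).det = 1 := by
  rw [Matrix.det_of_upperTriangular (M := Dm n)]
  · simp [Dm]
  · intro i j hji
    have hji' : (j : ℕ) < (i : ℕ) := hji
    simp only [Dm]
    rw [if_neg (fun hc => by rw [hc] at hji'; omega), if_neg (by omega)]

private lemma Dm_mul (n : ℕ) (M : Matrix (Fin n) (Fin n) ℤ) (i : Fin n) (j : Fin n) :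
    (Dm n * M) i j = M i j - (if h : (i : ℕ) + 1 < n then M ⟨(i : ℕ) + 1, h⟩ j else 0) := by
  rw [Matrix.mul_apply]
  by_cases h : (i : ℕ) + 1 < n
  · rw [dif_pos h]
    have hpt : ∀ i' : Fin n, Dm n i i' * M i' j =
        (if i' = i then M i j else 0) + (if i' = ⟨(i : ℕ) + 1, h⟩ then -(M ⟨(i : ℕ) + 1, h⟩ j) else 0) := by
      intro i'
      by_cases h1 : i' = i
      · subst h1
        rw [if_pos rfl, if_neg (by intro hc; rw [Fin.ext_iff] at hc; simp at hc)]
        simp [Dm]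
      · by_cases h2 : i' = ⟨(i : ℕ) + 1, h⟩
        · subst h2
          rw [if_neg h1, if_pos rfl]
          simp only [Dm, if_neg h1, if_pos rfl]
          norm_num
        · rw [if_neg h1, if_neg h2]
          simp only [Dm, if_neg h1]
          rw [if_neg (fun hc => h2 (Fin.ext hc))]
          ring
    rw [Finset.sum_congr rfl (fun i' _ => hpt i'), Finset.sum_add_distrib,
      Finset.sum_ite_eq' Finset.univ i, Finset.sum_ite_eq' Finset.univ]
    simp
    ring
  · rw [dif_neg h]
    have hpt : ∀ i' : Fin n, Dm n i i' * M i' j = (if i' = i then M i j else 0) := by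
      intro i'
      by_cases h1 : i' = i
      · subst h1; simp [Dm]
      · rw [if_neg h1]
        simp only [Dm, if_neg h1]
        rw [if_neg (by have := i'.isLt; omega)]
        ring
    rw [Finset.sum_congr rfl (fun i' _ => hpt i'), Finset.sum_ite_eq' Finset.univ]
    simp

private lemma col_prop (n : ℕ) (v : Fin n → ℤ)
    (hv01 : ∀ i, v i = 0 ∨ v i = 1)
    (hconv : ∀ i1 i i2 : Fin n, i1 ≤ i → i ≤ i2 → v i1 = 1 → v i2 = 1 → v i = 1) :
    let w : Fin n → ℤ := fun i => v i - (if h : (i : ℕ) + 1 < n then v ⟨(i : ℕ) + 1, h⟩ else 0)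
    (∀ i, w i = -1 ∨ w i = 0 ∨ w i = 1) ∧
    (∀ i i', w i = 1 → w i' = 1 → i = i') ∧
    (∀ i i', w i = -1 → w i' = -1 → i = i') := by
  intro w
  have hw1 : ∀ i, w i = 1 → v i = 1 ∧ ∀ h : (i : ℕ) + 1 < n, v ⟨(i : ℕ) + 1, h⟩ = 0 := by
    intro i hwi
    simp only [w] at hwi
    by_cases h : (i : ℕ) + 1 < n
    · rw [dif_pos h] at hwi
      rcases hv01 i with h0 | h0 <;> rcases hv01 ⟨(i : ℕ) + 1, h⟩ with h1 | h1 <;>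
        refine ⟨by omega, fun _ => by omega⟩
    · rw [dif_neg h] at hwi
      exact ⟨by omega, fun hc => absurd hc h⟩
  have hwm : ∀ i, w i = -1 → ∃ h : (i : ℕ) + 1 < n, v i = 0 ∧ v ⟨(i : ℕ) + 1, h⟩ = 1 := by
    intro i hwi
    simp only [w] at hwi
    by_cases h : (i : ℕ) + 1 < n
    · rw [dif_pos h] at hwi
      rcases hv01 i with h0 | h0 <;> rcases hv01 ⟨(i : ℕ) + 1, h⟩ with h1 | h1 <;>
        exact ⟨h, by omega, by omega⟩
    · rw [dif_neg h] at hwi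
      rcases hv01 i with h0 | h0 <;> omega
  refine ⟨?_, ?_, ?_⟩
  · intro i
    simp only [w]
    by_cases h : (i : ℕ) + 1 < n
    · rw [dif_pos h]
      rcases hv01 i with h0 | h0 <;> rcases hv01 ⟨(i : ℕ) + 1, h⟩ with h1 | h1 <;> omega
    · rw [dif_neg h]
      rcases hv01 i with h0 | h0 <;> omega
  · have hlt : ∀ i i' : Fin n, (i : ℕ) < (i' : ℕ) → w i = 1 → w i' = 1 → False := by
      intro i i' hlt hwi hwi'
      obtain ⟨hvi, hnext⟩ := hw1 i hwi
      obtain ⟨hvi', _⟩ := hw1 i' hwi'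
      have h : (i : ℕ) + 1 < n := by have := i'.isLt; omega
      have := hconv i ⟨(i : ℕ) + 1, h⟩ i' (by rw [Fin.le_def]; simp) (by rw [Fin.le_def]; simp; omega) hvi hvi'
      rw [hnext h] at this
      omega
    intro i i' hwi hwi'
    by_contra hne
    rcases Nat.lt_or_ge (i : ℕ) (i' : ℕ) with h | h
    · exact hlt i i' h hwi hwi'
    · have : (i' : ℕ) < (i : ℕ) := by
        rcases Nat.lt_or_ge (i' : ℕ) (i : ℕ) with h' | h'
        · exact h'
        · exact absurd (Fin.ext (le_antisymm h' h)) hne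
      exact hlt i' i this hwi' hwi
  · have hlt : ∀ i i' : Fin n, (i : ℕ) < (i' : ℕ) → w i = -1 → w i' = -1 → False := by
      intro i i' hlt hwi hwi'
      obtain ⟨h, hvi, hnext⟩ := hwm i hwi
      obtain ⟨h', hvi', hnext'⟩ := hwm i' hwi'
      have := hconv ⟨(i : ℕ) + 1, h⟩ i' ⟨(i' : ℕ) + 1, h'⟩ (by rw [Fin.le_def]; simp; omega) (by rw [Fin.le_def]; simp) hnext hnext'
      omega
    intro i i' hwi hwi'
    by_contra hne
    rcases Nat.lt_or_ge (i : ℕ) (i' : ℕ) with h | h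
    · exact hlt i i' h hwi hwi'
    · have : (i' : ℕ) < (i : ℕ) := by
        rcases Nat.lt_or_ge (i' : ℕ) (i : ℕ) with h' | h'
        · exact h'
        · exact absurd (Fin.ext (le_antisymm h' h)) hne
      exact hlt i' i this hwi' hwi

theorem stmt2 (p q : ℕ) (A : Matrix (Fin p) (Fin q) ℤ)
    (h01 : ∀ i j, A i j = 0 ∨ A i j = 1)
    (hcons : ∀ j : Fin q, ∃ aj bj : ℕ, aj ≤ bj ∧
      ∀ i : Fin p, A i j = 1 ↔ (aj ≤ i.1 ∧ i.1 ≤ bj)) :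
    ∀ (k : ℕ) (f : Fin k → Fin p) (g : Fin k → Fin q),
      Function.Injective f → Function.Injective g →
        (A.submatrix f g).det ∈ ({-1, 0, 1} : Set ℤ) := by
  intro k f g hf hg
  set σ := Tuple.sort f with hσ
  have hmono : Monotone (f ∘ σ) := Tuple.monotone_sort f
  set M := A.submatrix (f ∘ σ) g with hM
  have hM01 : ∀ i j, M i j = 0 ∨ M i j = 1 := fun i j => h01 _ _
  have hMconv : ∀ (j : Fin k) (i1 i i2 : Fin k), i1 ≤ i → i ≤ i2 →
      M i1 j = 1 → M i2 j = 1 → M i j = 1 := by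
    intro j i1 i i2 h12 h23 hv1 hv2
    obtain ⟨a, b, _, hch⟩ := hcons (g j)
    simp only [hM, Matrix.submatrix_apply] at hv1 hv2 ⊢
    rw [hch] at hv1 hv2 ⊢
    have m1 : ((f ∘ σ) i1 : ℕ) ≤ ((f ∘ σ) i : ℕ) := hmono h12
    have m2 : ((f ∘ σ) i : ℕ) ≤ ((f ∘ σ) i2 : ℕ) := hmono h23
    simp only [Function.comp_apply] at m1 m2 hv1 hv2 ⊢
    omega
  -- difference matrix
  set B := Dm k * M with hB
  have hBcol : ∀ (j : Fin k),
      (∀ i, B i j = -1 ∨ B i j = 0 ∨ B i j = 1) ∧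
      (∀ i i', B i j = 1 → B i' j = 1 → i = i') ∧
      (∀ i i', B i j = -1 → B i' j = -1 → i = i') := by
    intro j
    have hcp := col_prop k (fun i => M i j) (fun i => hM01 i j)
      (fun i1 i i2 h1 h2 hv1 hv2 => hMconv j i1 i i2 h1 h2 hv1 hv2)
    have hw : ∀ i, B i j =
        M i j - (if h : (i : ℕ) + 1 < k then M ⟨(i : ℕ) + 1, h⟩ j else 0) :=
      fun i => Dm_mul k M i j
    refine ⟨fun i => by rw [hw i]; have := hcp.1 i; beta_reduce at this; exact this,
      fun i i' h1 h2 => hcp.2.1 i i' (by beta_reduce; rw [← hw i]; exact h1) (by beta_reduce; rw [← hw i']; exact h2),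
      fun i i' h1 h2 => hcp.2.2 i i' (by beta_reduce; rw [← hw i]; exact h1) (by beta_reduce; rw [← hw i']; exact h2)⟩
  have hBdet : B.det ∈ ({-1, 0, 1} : Set ℤ) :=
    key k B (fun i j => (hBcol j).1 i) (fun j => (hBcol j).2.1) (fun j => (hBcol j).2.2)
  have hMdet : M.det ∈ ({-1, 0, 1} : Set ℤ) := by
    rwa [hB, Matrix.det_mul, det_Dm, one_mul] at hBdet
  have hMeq : M = (A.submatrix f g).submatrix σ id := by
    ext i j
    simp [hM, Matrix.submatrix_apply]
  rw [hMeq, Matrix.det_permute] at hMdet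
  have hsgn : ((Equiv.Perm.sign σ : ℤˣ) : ℤ) = 1 ∨ ((Equiv.Perm.sign σ : ℤˣ) : ℤ) = -1 := by
    rcases Int.units_eq_one_or (Equiv.Perm.sign σ) with h | h <;> rw [h] <;> simp
  exact memS_of_mul hsgn hMdet
end

section
/- An interval graph admits a proper k-coloring if and only if it contains no clique of size greater than k. Equivalently, interval graphs are perfect in the sense that chromatic number equals clique number. -/
theorem stmt3 (V : Type) [Fintype V] (lo hi : V → ℤ) (hlh : ∀ v, lo v ≤ hi v)
    (G : SimpleGraph V)
    (hG : ∀ v w, G.Adj v w ↔ v ≠ w ∧ lo v ≤ hi w ∧ lo w ≤ hi v)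
    (q : ℕ) :
    G.Colorable q ↔ ∀ t : Finset V, G.IsClique (↑t : Set V) → t.card ≤ q := by
  classical
  constructor
  · intro hcol t ht
    by_contra hq
    push_neg at hq
    obtain ⟨u, hu, hcard⟩ := Finset.exists_subset_card_eq (Nat.succ_le_of_lt hq) (s := t)
    exact hcol.cliqueFree (Nat.lt_succ_self q) u ⟨ht.subset (by exact_mod_cast hu), hcard⟩
  · intro hcl
    -- greedy coloring by strong induction on finsets
    have key : ∀ s : Finset V, ∃ c : V → ℕ,
        (∀ v ∈ s, c v < q) ∧ ∀ v ∈ s, ∀ w ∈ s, G.Adj v w → c v ≠ c w := by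
      intro s
      induction s using Finset.strongInduction with
      | _ s ih =>
        rcases s.eq_empty_or_nonempty with rfl | hs
        · exact ⟨fun _ => 0, by simp, by simp⟩
        · obtain ⟨v, hv, hmax⟩ := s.exists_max_image lo hs
          obtain ⟨c, hlt, hprop⟩ := ih (s.erase v) (Finset.erase_ssubset hv)
          set N : Finset V := (s.erase v).filter (fun w => G.Adj v w) with hN
          have hNclique : G.IsClique (↑(insert v N) : Set V) := by
            intro x hx y hy hxy
            simp only [Finset.coe_insert, Set.mem_insert_iff, Finset.mem_coe] at hx hy
            have hNadj : ∀ z ∈ N, G.Adj v z := fun z hz =>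
              (Finset.mem_filter.mp hz).2
            have hNs : ∀ z ∈ N, z ∈ s := fun z hz =>
              Finset.mem_of_mem_erase (Finset.mem_filter.mp hz).1
            rcases hx with rfl | hx
            · rcases hy with rfl | hy
              · exact absurd rfl hxy
              · exact hNadj y hy
            · rcases hy with rfl | hy
              · exact (hNadj x hx).symm
              · -- both in N: both intervals contain lo v
                have hxv : lo v ≤ hi x := ((hG v x).mp (hNadj x hx)).2.1
                have hyv : lo v ≤ hi y := ((hG v y).mp (hNadj y hy)).2.1
                have hxl : lo x ≤ lo v := hmax x (hNs x hx)
                have hyl : lo y ≤ lo v := hmax y (hNs y hy)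
                exact (hG x y).mpr ⟨hxy, le_trans hxl hyv, le_trans hyl hxv⟩
          have hvN : v ∉ N := fun h =>
            (Finset.mem_erase.mp (Finset.mem_filter.mp h).1).1 rfl
          have hNcard : N.card < q := by
            have := hcl (insert v N) hNclique
            rwa [Finset.card_insert_of_notMem hvN, Nat.succ_le_iff] at this
          have hTsub : N.image c ⊆ Finset.range q := by
            intro a ha
            obtain ⟨w, hw, rfl⟩ := Finset.mem_image.mp ha
            exact Finset.mem_range.mpr (hlt w (Finset.mem_filter.mp hw).1)
          have : (Finset.range q \ N.image c).Nonempty := by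
            have h2 := Finset.card_image_le (s := N) (f := c)
            rw [← Finset.card_pos, Finset.card_sdiff_of_subset hTsub, Finset.card_range]
            omega
          obtain ⟨a, ha⟩ := this
          rw [Finset.mem_sdiff, Finset.mem_range] at ha
          refine ⟨Function.update c v a, ?_, ?_⟩
          · intro w hw
            by_cases hwv : w = v
            · subst hwv; simpa using ha.1
            · rw [Function.update_of_ne hwv]
              exact hlt w (Finset.mem_erase.mpr ⟨hwv, hw⟩)
          · intro x hx y hy hadj
            by_cases hxv : x = v
            · subst hxv
              have hyv : y ≠ x := fun h => G.irrefl (h ▸ hadj)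
              have hyN : y ∈ N := Finset.mem_filter.mpr
                ⟨Finset.mem_erase.mpr ⟨hyv, hy⟩, hadj⟩
              rw [Function.update_self, Function.update_of_ne hyv]
              exact fun h => ha.2 (Finset.mem_image.mpr ⟨y, hyN, h.symm⟩)
            · by_cases hyv : y = v
              · subst hyv
                have hxN : x ∈ N := Finset.mem_filter.mpr
                  ⟨Finset.mem_erase.mpr ⟨hxv, hx⟩, hadj.symm⟩
                rw [Function.update_self, Function.update_of_ne hxv]
                exact fun h => ha.2 (Finset.mem_image.mpr ⟨x, hxN, h⟩)
              · rw [Function.update_of_ne hxv, Function.update_of_ne hyv]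
                exact hprop x (Finset.mem_erase.mpr ⟨hxv, hx⟩)
                  y (Finset.mem_erase.mpr ⟨hyv, hy⟩) hadj
    obtain ⟨c, hlt, hprop⟩ := key Finset.univ
    exact ⟨SimpleGraph.Coloring.mk (fun v => ⟨c v, hlt v (Finset.mem_univ v)⟩)
      (fun {x y} hadj h => hprop x (Finset.mem_univ x) y (Finset.mem_univ y) hadj
        (by simpa [Fin.ext_iff] using h))⟩
end

section
/- Let each stream s ∈ S have period p_s = 2^{k_s} with k_s ≤ k*, and for each s create p_S/p_s copies v_s^1,…,v_s^{p_S/p_s} where p_S = 2^{k*}; join v_s^i and v_{s'}^j whenever I_s ∩ I_{s'} ≠ ∅ to form graph G*_S. A proper p_S-coloring C of G*_S is 'good' if C(v_s^i) ∈ [(i−1)p_s + 1, i·p_s] for all s and i. Then G*_S admits a good p_S-coloring if and only if for every ℓ ∈ {1,…,n−1}, Σ_{k=0}^{k*} 2^{k*−k}·|{s ∈ S : p_s = 2^k and ℓ ∈ I_s}| ≤ 2^{k*}. -/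
/-- A "good" partial coloring for the multiplicity interval graph `G*_S`:
streams `s` have intervals `[a s, b s - 1]` and periods `2 ^ k s`; with hyperperiod `2 ^ K`
each stream has `2 ^ (K - k s)` copies indexed by `i < 2 ^ (K - k s)`.  `Q` restricts to a
subset of the streams.  The coloring must be proper (copies with intersecting intervals get
distinct colors) and each copy `i` must receive a color in the window
`[i * 2 ^ k s + 1, (i + 1) * 2 ^ k s]`. -/
def GoodOn {S : Type} (a b k : S → ℕ) (K : ℕ) (Q : S → Prop) (C : S → ℕ → ℕ) : Prop :=
  (∀ s i s' i', Q s → Q s' → i < 2 ^ (K - k s) → i' < 2 ^ (K - k s') →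
      (s ≠ s' ∨ i ≠ i') →
      (Finset.Icc (a s) (b s - 1) ∩ Finset.Icc (a s') (b s' - 1)).Nonempty →
      C s i ≠ C s' i')
  ∧ ∀ s, Q s → ∀ i, i < 2 ^ (K - k s) →
      i * 2 ^ k s + 1 ≤ C s i ∧ C s i ≤ (i + 1) * 2 ^ k s


/-!
Necessity: the copies active at a point `ℓ` receive pairwise distinct colours in `[1, 2 ^ K]`,
and there are `∑ 2 ^ (K - k s)` of them.

Sufficiency, by induction on `K`. Colour the first `2 ^ (K - k)` copies of a stream of period
`2 ^ k ≤ 2 ^ K` in `[1, 2 ^ K]` and the others in `[2 ^ K + 1, 2 ^ (K + 1)]`: each half is an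
instance with hyperperiod `2 ^ K` and the same demand `d`. The single copies of the streams of
period `2 ^ (K + 1)` have to be shared between the halves, and at each point `ℓ` there are at most
`2 (2 ^ K - d ℓ)` of them. Closed intervals covering every point `x` at most `2 c x` times split
into two families covering it at most `c x` times each: pad with one-point intervals until the
coverage is exactly `2 c x`, then split evenly by pairing the two intervals with the leftmost left
endpoint (if they differ, the shorter one is paired with the rest of the longer, recursively).
-/

open Finset

def intervalLoad (M : Multiset (ℕ × ℕ)) (x : ℕ) : ℕ :=
  M.countP fun p => p.1 ≤ x ∧ x ≤ p.2

namespace intervalLoad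

lemma add (M N : Multiset (ℕ × ℕ)) (x : ℕ) :
    intervalLoad (M + N) x = intervalLoad M x + intervalLoad N x :=
  Multiset.countP_add _ _ _

lemma cons (p : ℕ × ℕ) (M : Multiset (ℕ × ℕ)) (x : ℕ) :
    intervalLoad (p ::ₘ M) x = intervalLoad M x + if p.1 ≤ x ∧ x ≤ p.2 then 1 else 0 :=
  Multiset.countP_cons _ _ _

lemma mono {M N : Multiset (ℕ × ℕ)} (h : M ≤ N) (x : ℕ) : intervalLoad M x ≤ intervalLoad N x :=
  Multiset.countP_le_of_le _ h

lemma eq_zero_of_lt {M : Multiset (ℕ × ℕ)} {x : ℕ} (h : ∀ p ∈ M, p.2 < x) :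
    intervalLoad M x = 0 :=
  Multiset.countP_eq_zero.mpr fun p hp hpx => by have := h p hp; omega

lemma cons_residual {u v : ℕ × ℕ} (h₁ : u.1 = v.1) (hu : u.1 ≤ u.2) (h₂ : u.2 ≤ v.2)
    (M : Multiset (ℕ × ℕ)) (x : ℕ) :
    intervalLoad (v ::ₘ M) x = intervalLoad (u ::ₘ (u.2 + 1, v.2) ::ₘ M) x := by
  simp only [cons]
  split_ifs <;> omega

lemma exists_eq (g : ℕ → ℕ) (N : ℕ) (hg : ∀ x, N ≤ x → g x = 0) :
    ∃ D : Multiset (ℕ × ℕ), (∀ p ∈ D, p.1 ≤ p.2) ∧ ∀ x, intervalLoad D x = g x := by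
  refine ⟨∑ y ∈ range N, g y • {(y, y)}, fun p hp => ?_, fun x => ?_⟩
  · obtain ⟨y, -, hy⟩ := Multiset.mem_sum.mp hp
    rw [Multiset.mem_singleton.mp (Multiset.mem_nsmul.mp hy).2]
  · have hpoint : ∀ y, Multiset.countP (fun p : ℕ × ℕ => p.1 ≤ x ∧ x ≤ p.2) {(y, y)} =
        if y = x then 1 else 0 := fun y => by
      rw [Multiset.countP_eq_card_filter, Multiset.filter_singleton]
      split_ifs <;> simp_all; omega
    rw [intervalLoad, ← Multiset.coe_countPAddMonoidHom, map_sum]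
    simp only [Multiset.coe_countPAddMonoidHom, Multiset.countP_nsmul, hpoint, mul_ite, mul_one,
      mul_zero, sum_ite_eq', mem_range]
    split_ifs with h
    · rfl
    · exact (hg x (not_lt.mp h)).symm

/-- The intervals containing the leftmost left endpoint all start there, and there are an even,
positive number of them. -/
lemma exists_eq_cons_cons_of_even {M : Multiset (ℕ × ℕ)} (hM : M ≠ 0)
    (hne : ∀ p ∈ M, p.1 ≤ p.2) (hev : ∀ x, Even (intervalLoad M x)) :
    ∃ u v M₀, M = u ::ₘ v ::ₘ M₀ ∧ u.1 = v.1 ∧ u.2 ≤ v.2 := by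
  obtain ⟨p, hpM, hmin⟩ := Multiset.exists_min_image Prod.fst hM
  set F := M.filter fun q => q.1 ≤ p.1 ∧ p.1 ≤ q.2
  have hpF : p ∈ F := Multiset.mem_filter.mpr ⟨hpM, le_rfl, hne p hpM⟩
  have hF : 2 ≤ Multiset.card F := by
    have hpos := Multiset.card_pos_iff_exists_mem.mpr ⟨p, hpF⟩
    have hcard : Multiset.card F = intervalLoad M p.1 :=
      (Multiset.countP_eq_card_filter _ _).symm
    obtain ⟨r, hr⟩ := hev p.1
    omega
  obtain ⟨v, hv⟩ : ∃ v, v ∈ F.erase p := Multiset.card_pos_iff_exists_mem.mp <| by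
    rw [Multiset.card_erase_of_mem hpF]
    exact Nat.sub_pos_of_lt hF
  have hvM : v ∈ M.erase p :=
    Multiset.mem_of_le (Multiset.erase_le_erase p (Multiset.filter_le _ M)) hv
  have hpv : p.1 = v.1 := by
    have := (Multiset.mem_filter.mp (Multiset.mem_of_mem_erase hv)).2.1
    have := hmin v (Multiset.mem_of_mem_erase hvM)
    omega
  have hM' : M = p ::ₘ v ::ₘ (M.erase p).erase v := by
    rw [Multiset.cons_erase hvM, Multiset.cons_erase hpM]
  rcases le_total p.2 v.2 with h | h
  · exact ⟨p, v, _, hM', hpv, h⟩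
  · exact ⟨v, p, _, hM'.trans (Multiset.cons_swap _ _ _), hpv.symm, h⟩

lemma exists_eq_add_of_even {M : Multiset (ℕ × ℕ)} (hne : ∀ p ∈ M, p.1 ≤ p.2)
    (hev : ∀ x, Even (intervalLoad M x)) :
    ∃ M₁ M₂, M = M₁ + M₂ ∧ ∀ x, intervalLoad M₁ x = intervalLoad M₂ x := by
  induction hn : Multiset.card M using Nat.strong_induction_on generalizing M with
  | _ n ih =>
  rcases eq_or_ne M 0 with rfl | hM
  · exact ⟨0, 0, rfl, fun _ => rfl⟩
  obtain ⟨u, v, M₀, rfl, h₁, h₂⟩ := exists_eq_cons_cons_of_even hM hne hev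
  have hu : u.1 ≤ u.2 := hne u (Multiset.mem_cons_self _ _)
  have hne₀ : ∀ p ∈ M₀, p.1 ≤ p.2 := fun p hp => hne p (by simp [hp])
  rcases h₂.eq_or_lt with h₂ | h₂
  · obtain rfl : u = v := Prod.ext h₁ h₂
    have hev₀ : ∀ x, Even (intervalLoad M₀ x) := fun x => by
      have := hev x
      simp only [cons, Nat.even_iff] at this ⊢
      omega
    obtain ⟨M₁, M₂, rfl, hbal⟩ := ih _ (by simp [← hn]) hne₀ hev₀ rfl
    refine ⟨u ::ₘ M₁, u ::ₘ M₂, by simp [Multiset.cons_add, Multiset.add_cons], fun x => ?_⟩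
    simp only [cons, hbal]
  -- `v` is `u` followed by the residual interval `r = [u.2 + 1, v.2]`: split `r ::ₘ M₀`, then
  -- `v` replaces `r` on its side and `u` joins the other side.
  have hres := cons_residual h₁ hu h₂.le
  have hev' : ∀ x, Even (intervalLoad ((u.2 + 1, v.2) ::ₘ M₀) x) := fun x => by
    have := hev x
    rw [cons _ (v ::ₘ M₀), hres, cons, Nat.even_iff] at this
    rw [Nat.even_iff]
    omega
  have hne' : ∀ p ∈ (u.2 + 1, v.2) ::ₘ M₀, p.1 ≤ p.2 := by simpa [Nat.succ_le_of_lt h₂] using hne₀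
  obtain ⟨M₁, M₂, hM, hbal⟩ := ih _ (by simp [← hn]) hne' hev' rfl
  wlog hr : (u.2 + 1, v.2) ∈ M₁ generalizing M₁ M₂
  · have hr' : (u.2 + 1, v.2) ∈ M₂ :=
      (Multiset.mem_add.mp (hM ▸ Multiset.mem_cons_self _ _)).resolve_left hr
    exact this M₂ M₁ (hM.trans (add_comm _ _)) (fun x => (hbal x).symm) hr'
  obtain ⟨M₁, rfl⟩ := Multiset.exists_cons_of_mem hr
  refine ⟨v ::ₘ M₁, u ::ₘ M₂, ?_, fun x => ?_⟩
  · rw [Multiset.cons_add, Multiset.cons_inj_right] at hM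
    rw [hM, Multiset.cons_swap, Multiset.cons_add, Multiset.add_cons]
  · have := hbal x
    rw [hres, cons, cons u]
    omega

lemma exists_eq_add_le_of_nonempty {M : Multiset (ℕ × ℕ)} (hne : ∀ p ∈ M, p.1 ≤ p.2)
    (c : ℕ → ℕ) (hc : ∀ x, intervalLoad M x ≤ 2 * c x) :
    ∃ M₁ M₂, M = M₁ + M₂ ∧ ∀ x, intervalLoad M₁ x ≤ c x ∧ intervalLoad M₂ x ≤ c x := by
  classical
  set N := (M.map Prod.snd).sup + 1
  have hM : ∀ x, N ≤ x → intervalLoad M x = 0 := fun x hx => eq_zero_of_lt fun p hp => by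
    have := Multiset.le_sup (Multiset.mem_map_of_mem Prod.snd hp)
    omega
  obtain ⟨D, hneD, hD⟩ := exists_eq (fun x => if x < N then 2 * c x - intervalLoad M x else 0) N
    fun x hx => if_neg (not_lt.mpr hx)
  have hMD : ∀ x, intervalLoad (M + D) x = if x < N then 2 * c x else 0 := fun x => by
    rw [add, hD]
    have := hc x
    split_ifs with h
    · omega
    · exact hM x (not_lt.mp h)
  have hev : ∀ x, Even (intervalLoad (M + D) x) := fun x => by
    rw [hMD]
    split_ifs
    · exact even_two_mul _
    · exact Even.zero
  obtain ⟨P₁, P₂, hP, hbal⟩ := exists_eq_add_of_even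
    (fun p hp => (Multiset.mem_add.mp hp).elim (hne p) (hneD p)) hev
  have hPc : ∀ x, intervalLoad P₁ x ≤ c x ∧ intervalLoad P₂ x ≤ c x := fun x => by
    have := hMD x
    rw [hP, add, hbal] at this
    rw [hbal]
    split_ifs at this <;> omega
  refine ⟨P₁ - D, M ∩ P₂, ?_, fun x => ⟨?_, ?_⟩⟩
  · rw [add_comm, Multiset.inter_add_sub_of_add_eq_add (by rw [add_comm, hP])]
  · exact (mono (Multiset.sub_le_self _ _) x).trans (hPc x).1
  · exact (mono Multiset.inter_le_right x).trans (hPc x).2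

lemma exists_eq_add_le (M : Multiset (ℕ × ℕ)) (c : ℕ → ℕ)
    (hc : ∀ x, intervalLoad M x ≤ 2 * c x) :
    ∃ M₁ M₂, M = M₁ + M₂ ∧ ∀ x, intervalLoad M₁ x ≤ c x ∧ intervalLoad M₂ x ≤ c x := by
  have hfilter : ∀ (q : ℕ × ℕ → Prop) [DecidablePred q] x,
      intervalLoad (M.filter q) x = M.countP fun p => (p.1 ≤ x ∧ x ≤ p.2) ∧ q p :=
    fun q _ x => Multiset.countP_filter _ q M
  have hnonempty : ∀ x, intervalLoad (M.filter fun p => p.1 ≤ p.2) x = intervalLoad M x :=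
    fun x => (hfilter _ x).trans <| Multiset.countP_congr rfl fun p _ =>
      propext ⟨fun h => h.1, fun h => ⟨h, h.1.trans h.2⟩⟩
  obtain ⟨M₁, M₂, hM, hMc⟩ := exists_eq_add_le_of_nonempty (M := M.filter fun p => p.1 ≤ p.2)
    (fun p hp => (Multiset.mem_filter.mp hp).2) c fun x => (hnonempty x).trans_le (hc x)
  refine ⟨M₁ + M.filter fun p => ¬p.1 ≤ p.2, M₂, ?_, fun x => ?_⟩
  · rw [add_right_comm, ← hM, Multiset.filter_add_not]
  · rw [add, hfilter, Multiset.countP_eq_zero.mpr fun p _ h => h.2 (h.1.1.trans h.1.2), add_zero]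
    exact hMc x

lemma map_eq_card_filter {ι : Type*} (T : Finset ι) (l r : ι → ℕ) (x : ℕ) :
    intervalLoad (T.val.map fun i => (l i, r i)) x = #{i ∈ T | l i ≤ x ∧ x ≤ r i} := by
  rw [intervalLoad, Multiset.countP_map, card_def, filter_val]

end intervalLoad

theorem Multiset.exists_eq_add_of_map_eq_add {α β : Type*} (f : α → β) {M : Multiset α}
    {P Q : Multiset β} (h : M.map f = P + Q) :
    ∃ M₁ M₂, M = M₁ + M₂ ∧ M₁.map f = P ∧ M₂.map f = Q := by
  induction M using Multiset.induction_on generalizing P Q with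
  | empty =>
    obtain ⟨rfl, rfl⟩ := add_eq_zero.mp h.symm
    exact ⟨0, 0, rfl, rfl, rfl⟩
  | cons a M ih =>
    wlog ha : f a ∈ P generalizing P Q
    · have hQ : f a ∈ Q :=
        (mem_add.mp (h ▸ mem_map_of_mem f (mem_cons_self a M))).resolve_left ha
      obtain ⟨M₁, M₂, hM, h₁, h₂⟩ := this (h.trans (add_comm P Q)) hQ
      exact ⟨M₂, M₁, hM.trans (add_comm _ _), h₂, h₁⟩
    obtain ⟨P, rfl⟩ := exists_cons_of_mem ha
    rw [map_cons, cons_add, cons_inj_right] at h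
    obtain ⟨M₁, M₂, rfl, rfl, rfl⟩ := ih h
    exact ⟨a ::ₘ M₁, M₂, (cons_add _ _ _).symm, map_cons _ _ _, rfl⟩

theorem Finset.exists_subset_card_filter_le {ι : Type*} [DecidableEq ι] (T : Finset ι)
    (l r : ι → ℕ) (c : ℕ → ℕ) (hc : ∀ x, #{i ∈ T | l i ≤ x ∧ x ≤ r i} ≤ 2 * c x) :
    ∃ T₁ ⊆ T, ∀ x, #{i ∈ T₁ | l i ≤ x ∧ x ≤ r i} ≤ c x ∧
      #{i ∈ T \ T₁ | l i ≤ x ∧ x ≤ r i} ≤ c x := by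
  obtain ⟨P₁, P₂, hP, hPc⟩ := intervalLoad.exists_eq_add_le (T.val.map fun i => (l i, r i)) c
    fun x => (intervalLoad.map_eq_card_filter T l r x).trans_le (hc x)
  obtain ⟨M₁, M₂, hM, rfl, rfl⟩ := Multiset.exists_eq_add_of_map_eq_add _ hP
  have hM₁ : M₁.Nodup := Multiset.nodup_of_le (hM ▸ Multiset.le_add_right _ _) T.nodup
  refine ⟨M₁.toFinset, fun i hi => ?_, fun x => ?_⟩
  · rw [Multiset.mem_toFinset] at hi
    exact mem_val.mp (hM ▸ Multiset.mem_add.mpr (Or.inl hi))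
  · have h₁ : M₁.toFinset.val = M₁ := Multiset.toFinset_val M₁ ▸ hM₁.dedup
    have h₂ : (T \ M₁.toFinset).val = M₂ := by rw [sdiff_val, h₁, hM, add_tsub_cancel_left]
    rw [← intervalLoad.map_eq_card_filter, ← intervalLoad.map_eq_card_filter, h₁, h₂]
    exact hPc x

section CopyArithmetic

variable {k K i : ℕ}

lemma two_pow_succ_sub (h : k ≤ K) : 2 ^ (K + 1 - k) = 2 * 2 ^ (K - k) := by
  rw [Nat.sub_add_comm h, pow_succ, mul_comm]

lemma mod_eq_ite_of_lt_two_mul {w : ℕ} (hi : i < 2 * w) :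
    i % w = if i < w then i else i - w := by
  split_ifs with h
  · exact Nat.mod_eq_of_lt h
  · rw [Nat.mod_eq_sub_mod (not_lt.mp h), Nat.mod_eq_of_lt (by omega)]

lemma mod_two_pow_sub_lt : i % 2 ^ (K - k) < 2 ^ (K - min k K) := by
  rw [show K - min k K = K - k by omega]
  exact Nat.mod_lt _ (by positivity)

/-! Copy `i` of a stream of period `2 ^ k` at hyperperiod `2 ^ (K + 1)` becomes copy
`i % 2 ^ (K - k)` of period `2 ^ min k K` at hyperperiod `2 ^ K`, in the lower or upper half of
the colours; its window contains the window of the new copy, shifted by `0` or by `2 ^ K`. -/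

lemma copy_window_low (hk : k ≤ K + 1) (hi : i < 2 ^ (K + 1 - k))
    (hlow : k ≤ K → i < 2 ^ (K - k)) :
    i * 2 ^ k ≤ i % 2 ^ (K - k) * 2 ^ min k K ∧
      (i % 2 ^ (K - k) + 1) * 2 ^ min k K ≤ (i + 1) * 2 ^ k := by
  rcases le_or_gt k K with h | h
  · rw [Nat.mod_eq_of_lt (hlow h), min_eq_left h]
    exact ⟨le_rfl, le_rfl⟩
  · obtain rfl : k = K + 1 := by omega
    obtain rfl : i = 0 := by simpa using hi
    simp [pow_succ]

lemma copy_window_high (hk : k ≤ K + 1) (hi : i < 2 ^ (K + 1 - k))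
    (hhigh : k ≤ K → 2 ^ (K - k) ≤ i) :
    i * 2 ^ k ≤ 2 ^ K + i % 2 ^ (K - k) * 2 ^ min k K ∧
      2 ^ K + (i % 2 ^ (K - k) + 1) * 2 ^ min k K ≤ (i + 1) * 2 ^ k := by
  rcases le_or_gt k K with h | h
  · have hK : 2 ^ (K - k) * 2 ^ k = 2 ^ K := pow_sub_mul_pow 2 h
    rw [mod_eq_ite_of_lt_two_mul (two_pow_succ_sub h ▸ hi), if_neg (not_lt.mpr (hhigh h)),
      min_eq_left h]
    obtain ⟨j, rfl⟩ := Nat.exists_eq_add_of_le (hhigh h)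
    rw [Nat.add_sub_cancel_left]
    constructor <;> nlinarith
  · obtain rfl : k = K + 1 := by omega
    obtain rfl : i = 0 := by simpa using hi
    simp [pow_succ]
    omega

lemma eq_of_mod_two_pow_eq {i' : ℕ} (hi : i < 2 ^ (K + 1 - k)) (hi' : i' < 2 ^ (K + 1 - k))
    (hside : k ≤ K → (i < 2 ^ (K - k) ↔ i' < 2 ^ (K - k)))
    (h : i % 2 ^ (K - k) = i' % 2 ^ (K - k)) : i = i' := by
  rcases le_or_gt k K with hkK | hkK
  · rw [mod_eq_ite_of_lt_two_mul (two_pow_succ_sub hkK ▸ hi),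
      mod_eq_ite_of_lt_two_mul (two_pow_succ_sub hkK ▸ hi')] at h
    have := hside hkK
    split_ifs at h <;> omega
  · have : 2 ^ (K + 1 - k) = 1 := by rw [Nat.sub_eq_zero_of_le hkK, pow_zero]
    omega

end CopyArithmetic

section Streams

variable {S : Type} (a b : S → ℕ)

def demand (k : S → ℕ) (K : ℕ) (T : Finset S) (ℓ : ℕ) : ℕ :=
  ∑ s ∈ T with a s ≤ ℓ ∧ ℓ ≤ b s - 1, 2 ^ (K - k s)

variable {a b} {k : S → ℕ} {K : ℕ}

lemma demand_union [DecidableEq S] {T T' : Finset S} (h : Disjoint T T') (ℓ : ℕ) :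
    demand a b k K (T ∪ T') ℓ = demand a b k K T ℓ + demand a b k K T' ℓ := by
  rw [demand, filter_union, sum_union (disjoint_filter_filter h)]
  rfl

lemma demand_min (T : Finset S) (ℓ : ℕ) :
    demand a b (fun s => min (k s) K) K T ℓ = demand a b k K T ℓ :=
  sum_congr rfl fun s _ => by dsimp only; congr 1; omega

lemma demand_eq_card {T : Finset S} (hk : ∀ s ∈ T, K ≤ k s) (ℓ : ℕ) :
    demand a b k K T ℓ = #{s ∈ T | a s ≤ ℓ ∧ ℓ ≤ b s - 1} := by
  rw [demand, card_eq_sum_ones]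
  refine sum_congr rfl fun s hs => ?_
  rw [Nat.sub_eq_zero_of_le (hk s (mem_filter.mp hs).1), pow_zero]

lemma demand_succ_of_le {T : Finset S} (hk : ∀ s ∈ T, k s ≤ K) (ℓ : ℕ) :
    demand a b k (K + 1) T ℓ = 2 * demand a b k K T ℓ := by
  rw [demand, demand, mul_sum]
  exact sum_congr rfl fun s hs => two_pow_succ_sub (hk s (mem_filter.mp hs).1)

lemma demand_succ (T : Finset S) (ℓ : ℕ) :
    demand a b k (K + 1) T ℓ =
      2 * demand a b k K {s ∈ T | k s ≤ K} ℓ +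
        #{s ∈ {s ∈ T | ¬k s ≤ K} | a s ≤ ℓ ∧ ℓ ≤ b s - 1} := by
  classical
  rw [← demand_succ_of_le fun s hs => (mem_filter.mp hs).2,
    ← demand_eq_card (k := k) (K := K + 1) fun s hs => by have := (mem_filter.mp hs).2; omega,
    ← demand_union (disjoint_filter_filter_not _ _ _), filter_union_filter_not_eq]

namespace GoodOn

variable {Q : S → Prop} {C : S → ℕ → ℕ}

lemma mono {Q' : S → Prop} (hC : GoodOn a b k K Q C) (hQ : ∀ s, Q' s → Q s) :
    GoodOn a b k K Q' C :=
  ⟨fun s i s' i' hs hs' => hC.1 s i s' i' (hQ s hs) (hQ s' hs'), fun s hs => hC.2 s (hQ s hs)⟩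

lemma le_two_pow (hC : GoodOn a b k K Q C) {s : S} {i : ℕ} (hks : k s ≤ K) (hs : Q s)
    (hi : i < 2 ^ (K - k s)) : C s i ≤ 2 ^ K :=
  calc C s i ≤ (i + 1) * 2 ^ k s := (hC.2 s hs i hi).2
    _ ≤ 2 ^ (K - k s) * 2 ^ k s := Nat.mul_le_mul_right _ hi
    _ = 2 ^ K := pow_sub_mul_pow 2 hks

lemma demand_le {T : Finset S} (hC : GoodOn a b k K (· ∈ T) C) (hk : ∀ s ∈ T, k s ≤ K)
    (ℓ : ℕ) : demand a b k K T ℓ ≤ 2 ^ K := by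
  set A := T.filter fun s => a s ≤ ℓ ∧ ℓ ≤ b s - 1
  have hcard : demand a b k K T ℓ = #(A.sigma fun s => range (2 ^ (K - k s))) := by
    simp only [demand, card_sigma, card_range, A]
  have hmaps : ∀ p ∈ A.sigma fun s => range (2 ^ (K - k s)), C p.1 p.2 ∈ Icc 1 (2 ^ K) := by
    intro p hp
    obtain ⟨hs, hi⟩ := mem_sigma.mp hp
    have hsT := (mem_filter.mp hs).1
    have := hC.2 p.1 hsT p.2 (mem_range.mp hi)
    exact mem_Icc.mpr ⟨by omega, hC.le_two_pow (hk p.1 hsT) hsT (mem_range.mp hi)⟩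
  have hinj : Set.InjOn (fun p : (_ : S) × ℕ => C p.1 p.2)
      (A.sigma fun s => range (2 ^ (K - k s))) := by
    rintro ⟨s, i⟩ hp ⟨s', i'⟩ hp' hcol
    obtain ⟨hs, hi⟩ := mem_sigma.mp hp
    obtain ⟨hs', hi'⟩ := mem_sigma.mp hp'
    obtain ⟨hsT, hℓ⟩ := mem_filter.mp hs
    obtain ⟨hsT', hℓ'⟩ := mem_filter.mp hs'
    by_contra hne
    refine hC.1 s i s' i' hsT hsT' (mem_range.mp hi) (mem_range.mp hi') ?_
      ⟨ℓ, mem_inter.mpr ⟨mem_Icc.mpr hℓ, mem_Icc.mpr hℓ'⟩⟩ hcol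
    by_cases hss : s = s'
    · subst hss
      exact Or.inr fun hii => hne (by rw [hii])
    · exact Or.inl hss
  simpa [hcard] using card_le_card_of_injOn _ hmaps hinj

end GoodOn

lemma goodOn_zero_of_demand_le_one {T : Finset S} (hT : ∀ ℓ, demand a b k 0 T ℓ ≤ 1) :
    GoodOn a b k 0 (· ∈ T) fun _ _ => 1 := by
  refine ⟨fun s i s' i' hs hs' hi hi' hne hint => ?_, fun s _ i hi => ?_⟩
  · obtain rfl : i = 0 := by simpa using hi
    obtain rfl : i' = 0 := by simpa using hi'
    obtain ⟨ℓ, hℓ⟩ := hint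
    rw [mem_inter, mem_Icc, mem_Icc] at hℓ
    have := hT ℓ
    rw [demand_eq_card fun _ _ => Nat.zero_le _] at this
    exact absurd (card_le_one.mp this s (mem_filter.mpr ⟨hs, hℓ.1⟩) s'
      (mem_filter.mpr ⟨hs', hℓ.2⟩)) (by simpa using hne)
  · obtain rfl : i = 0 := by simpa using hi
    simpa using Nat.one_le_two_pow


variable (k K) in
/-- For a stream of period `2 ^ (K + 1)` we have `2 ^ (K - k s) = 1`: its single copy goes to the
half chosen by `Q₁`. -/
def stack (Q₁ : S → Prop) [DecidablePred Q₁] (C₁ C₂ : S → ℕ → ℕ) (s : S) (i : ℕ) : ℕ :=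
  if (k s ≤ K → i < 2 ^ (K - k s)) ∧ (K < k s → Q₁ s) then C₁ s (i % 2 ^ (K - k s))
  else 2 ^ K + C₂ s (i % 2 ^ (K - k s))

theorem goodOn_stack {Q Q₁ Q₂ : S → Prop} [DecidablePred Q₁] {C₁ C₂ : S → ℕ → ℕ}
    (hk : ∀ s, Q s → k s ≤ K + 1) (hQ₁ : ∀ s, Q s → k s ≤ K → Q₁ s)
    (hQ₂ : ∀ s, Q s → (k s ≤ K ∨ ¬Q₁ s) → Q₂ s)
    (h₁ : GoodOn a b (fun s => min (k s) K) K Q₁ C₁)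
    (h₂ : GoodOn a b (fun s => min (k s) K) K Q₂ C₂) :
    GoodOn a b k (K + 1) Q (stack k K Q₁ C₁ C₂) := by
  have hsub : ∀ s i, i % 2 ^ (K - k s) < 2 ^ (K - min (k s) K) := fun _ _ => mod_two_pow_sub_lt
  have hlow : ∀ s, Q s → (K < k s → Q₁ s) → Q₁ s := fun s hs h =>
    (le_or_gt (k s) K).elim (hQ₁ s hs) h
  have hhigh : ∀ s i, Q s → ¬((k s ≤ K → i < 2 ^ (K - k s)) ∧ (K < k s → Q₁ s)) → Q₂ s :=
    fun s i hs h => hQ₂ s hs (by by_contra; simp_all)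
  refine ⟨fun s i s' i' hs hs' hi hi' hne hint heq => ?_, fun s hs i hi => ?_⟩
  · have hdist : (s = s' → k s ≤ K → (i < 2 ^ (K - k s) ↔ i' < 2 ^ (K - k s))) →
        s ≠ s' ∨ i % 2 ^ (K - k s) ≠ i' % 2 ^ (K - k s') := fun hside => by
      by_cases hss : s = s'
      · subst hss
        exact Or.inr fun hmod => hne.resolve_left (not_not_intro rfl)
          (eq_of_mod_two_pow_eq hi hi' (hside rfl) hmod)
      · exact Or.inl hss
    simp only [stack] at heq
    split_ifs at heq with hl hl' hl'
    · exact h₁.1 s _ s' _ (hlow s hs hl.2) (hlow s' hs' hl'.2) (hsub s i) (hsub s' i')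
        (hdist fun hss h => by subst hss; exact iff_of_true (hl.1 h) (hl'.1 h)) hint heq
    · have := h₁.le_two_pow (min_le_right _ _) (hlow s hs hl.2) (hsub s i)
      have := (h₂.2 s' (hhigh s' i' hs' hl') _ (hsub s' i')).1
      omega
    · have := h₁.le_two_pow (min_le_right _ _) (hlow s' hs' hl'.2) (hsub s' i')
      have := (h₂.2 s (hhigh s i hs hl) _ (hsub s i)).1
      omega
    · exact h₂.1 s _ s' _ (hhigh s i hs hl) (hhigh s' i' hs' hl') (hsub s i) (hsub s' i')
        (hdist fun hss h => by subst hss; exact iff_of_false (by simp_all) (by simp_all)) hint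
        (Nat.add_left_cancel heq)
  · simp only [stack]
    split_ifs with hl
    · have := h₁.2 s (hlow s hs hl.2) _ (hsub s i)
      have := copy_window_low (hk s hs) hi hl.1
      dsimp only at *
      omega
    · have := h₂.2 s (hhigh s i hs hl) _ (hsub s i)
      have := copy_window_high (hk s hs) hi fun h => by simp_all
      dsimp only at *
      omega

variable (a b) in
theorem exists_goodOn_of_demand_le (K : ℕ) (k : S → ℕ) (T : Finset S)
    (hk : ∀ s ∈ T, k s ≤ K) (hT : ∀ ℓ, demand a b k K T ℓ ≤ 2 ^ K) :
    ∃ C, GoodOn a b k K (· ∈ T) C := by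
  classical
  induction K generalizing k T with
  | zero => exact ⟨_, goodOn_zero_of_demand_le_one hT⟩
  | succ K ih =>
  set B := T.filter (k · ≤ K)
  set U := T.filter fun s => ¬k s ≤ K
  have hT' : ∀ ℓ, 2 * demand a b k K B ℓ + #{s ∈ U | a s ≤ ℓ ∧ ℓ ≤ b s - 1} ≤ 2 * 2 ^ K :=
    fun ℓ => by rw [← demand_succ, ← pow_succ']; exact hT ℓ
  have hhalf : ∀ T' ⊆ U,
      (∀ ℓ, #{s ∈ T' | a s ≤ ℓ ∧ ℓ ≤ b s - 1} ≤ 2 ^ K - demand a b k K B ℓ) →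
      ∃ C, GoodOn a b (fun s => min (k s) K) K (· ∈ B ∪ T') C := fun T' hT'U hcap =>
    ih _ (B ∪ T') (fun _ _ => min_le_right _ _) fun ℓ => by
      have := hT' ℓ
      have := hcap ℓ
      rw [demand_min, demand_union (T := B)
        (disjoint_of_subset_right hT'U (disjoint_filter_filter_not _ _ _)),
        demand_eq_card (T := T') fun s hs => by have := (mem_filter.mp (hT'U hs)).2; omega]
      omega
  obtain ⟨T₁, hT₁U, hT₁⟩ := U.exists_subset_card_filter_le a (fun s => b s - 1)
    (fun ℓ => 2 ^ K - demand a b k K B ℓ) fun ℓ => by have := hT' ℓ; omega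
  obtain ⟨C₁, h₁⟩ := hhalf T₁ hT₁U fun ℓ => (hT₁ ℓ).1
  obtain ⟨C₂, h₂⟩ := hhalf (U \ T₁) sdiff_subset fun ℓ => (hT₁ ℓ).2
  refine ⟨_, goodOn_stack hk (fun s hs hs' => ?_) (fun s hs h => ?_) h₁ h₂⟩
  · exact mem_union_left _ (mem_filter.mpr ⟨hs, hs'⟩)
  · simp only [B, U, mem_union, mem_sdiff, mem_filter, not_or] at h ⊢
    tauto

end Streams

theorem stmt6_general (S : Type) [Fintype S] (kstar : ℕ) (a b k : S → ℕ)
    (hk : ∀ s, k s ≤ kstar) :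
    (∃ C : S → ℕ → ℕ, GoodOn a b k kstar (fun _ => True) C) ↔
      ∀ ℓ : ℕ,
        (∑ s ∈ Finset.univ.filter fun s => a s ≤ ℓ ∧ ℓ ≤ b s - 1, 2 ^ (kstar - k s))
          ≤ 2 ^ kstar := by
  constructor
  · rintro ⟨C, hC⟩
    exact (hC.mono fun _ _ => trivial).demand_le fun s _ => hk s
  · intro h
    obtain ⟨C, hC⟩ := exists_goodOn_of_demand_le a b kstar k univ (fun s _ => hk s) h
    exact ⟨C, hC.mono fun s _ => mem_univ s⟩

theorem stmt6 (S : Type) [Fintype S] (n kstar : ℕ) (a b k : S → ℕ)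
    (hab : ∀ s, 1 ≤ a s ∧ a s < b s ∧ b s ≤ n) (hk : ∀ s, k s ≤ kstar) :
    (∃ C : S → ℕ → ℕ, GoodOn a b k kstar (fun _ => True) C) ↔
      ∀ ℓ : ℕ,
        (∑ s ∈ Finset.univ.filter fun s => a s ≤ ℓ ∧ ℓ ≤ b s - 1, 2 ^ (kstar - k s))
          ≤ 2 ^ kstar :=
  stmt6_general S kstar a b k hk
end

section
/- With notation as in the good-coloring problem (periods are powers of two, maximum period 2^{k*} with k* ≥ 1): G*_S admits a good 2^{k*}-coloring if and only if there exists a partition of S_{k*} = {s : p_s = 2^{k*}} into disjoint sets S^a_{k*} and S^b_{k*} such that both G*_{S^a} and G*_{S^b} admit good 2^{k*−1}-colorings, where S^a (resp. S^b) consists of all streams of period < 2^{k*} together with the streams of S^a_{k*} (resp. S^b_{k*}) re-assigned period 2^{k*−1}. -/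
private lemma hpow {ks K1 : ℕ} (h : ks ≤ K1) : 2 ^ (K1 - ks) * 2 ^ ks = 2 ^ K1 := by
  rw [← pow_add]; congr 1; omega

private lemma hpow2 {ks K1 : ℕ} (h : ks ≤ K1) :
    2 ^ (K1 + 1 - ks) = 2 ^ (K1 - ks) + 2 ^ (K1 - ks) := by
  rw [show K1 + 1 - ks = (K1 - ks) + 1 by omega, pow_succ]; omega

theorem stmt7 (S : Type) [Fintype S] (kstar : ℕ) (hk1 : 1 ≤ kstar)
    (a b k : S → ℕ) (hab : ∀ s, 1 ≤ a s ∧ a s < b s) (hk : ∀ s, k s ≤ kstar) :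
    (∃ C : S → ℕ → ℕ, GoodOn a b k kstar (fun _ => True) C) ↔
      ∃ P : S → Bool,
        (∃ C : S → ℕ → ℕ, GoodOn a b (fun s => min (k s) (kstar - 1)) (kstar - 1)
            (fun s => k s < kstar ∨ P s = false) C) ∧
        (∃ C : S → ℕ → ℕ, GoodOn a b (fun s => min (k s) (kstar - 1)) (kstar - 1)
            (fun s => k s < kstar ∨ P s = true) C) := by
  obtain ⟨K1, rfl⟩ : ∃ K1, kstar = K1 + 1 := ⟨kstar - 1, by omega⟩
  simp only [GoodOn, Nat.add_sub_cancel]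
  have hcap : ∀ s j, j < 2 ^ (K1 - min (k s) K1) → (j + 1) * 2 ^ (min (k s) K1) ≤ 2 ^ K1 := by
    intro s j hj
    calc (j + 1) * 2 ^ (min (k s) K1) ≤ 2 ^ (K1 - min (k s) K1) * 2 ^ (min (k s) K1) :=
          Nat.mul_le_mul_right _ (by omega)
      _ = 2 ^ K1 := hpow (min_le_right _ _)
  constructor
  · rintro ⟨C, hprop, hwin⟩
    have boundA : ∀ s i, i < 2 ^ (K1 - min (k s) K1) → i < 2 ^ (K1 + 1 - k s) := by
      intro s i hi
      rcases le_or_gt (k s) K1 with h | h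
      · rw [min_eq_left h] at hi
        exact lt_of_lt_of_le hi (Nat.pow_le_pow_right (by norm_num) (by omega))
      · have hks : k s = K1 + 1 := by have := hk s; omega
        rw [min_eq_right h.le, Nat.sub_self] at hi
        rw [hks]; simpa using hi
    have keyb : ∀ s i, (k s < K1 + 1 ∨ decide (2 ^ K1 < C s 0) = true) →
        i < 2 ^ (K1 - min (k s) K1) →
        (if k s ≤ K1 then i + 2 ^ (K1 - k s) else i) < 2 ^ (K1 + 1 - k s) ∧
        i * 2 ^ (min (k s) K1) + 2 ^ K1 + 1 ≤
          C s (if k s ≤ K1 then i + 2 ^ (K1 - k s) else i) ∧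
        C s (if k s ≤ K1 then i + 2 ^ (K1 - k s) else i) ≤
          (i + 1) * 2 ^ (min (k s) K1) + 2 ^ K1 := by
      intro s i hQ hi
      rcases le_or_gt (k s) K1 with h | h
      · rw [if_pos h]
        rw [min_eq_left h] at hi ⊢
        have h2 := hpow2 h
        have h1 := hpow h
        have hJ : i + 2 ^ (K1 - k s) < 2 ^ (K1 + 1 - k s) := by omega
        obtain ⟨hw1, hw2⟩ := hwin s trivial _ hJ
        have e1 : (i + 2 ^ (K1 - k s)) * 2 ^ k s = i * 2 ^ k s + 2 ^ K1 := by
          rw [add_mul, h1]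
        have e2 : (i + 2 ^ (K1 - k s) + 1) * 2 ^ k s = (i + 1) * 2 ^ k s + 2 ^ K1 := by
          rw [← h1, ← add_mul]; congr 1; omega
        rw [e1] at hw1
        rw [e2] at hw2
        exact ⟨hJ, by omega, hw2⟩
      · have hks : k s = K1 + 1 := by have := hk s; omega
        have hi0 : i = 0 := by
          rw [min_eq_right h.le, Nat.sub_self] at hi; simpa using hi
        subst hi0
        rw [if_neg (by omega), min_eq_right h.le]
        have hP : 2 ^ K1 < C s 0 := by
          rcases hQ with h' | h'
          · omega
          · simpa using h'
        have hw := hwin s trivial 0 (by rw [hks]; simp)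
        rw [hks] at hw
        have hpp : 2 ^ (K1 + 1) = 2 ^ K1 + 2 ^ K1 := by rw [pow_succ]; omega
        simp only [Nat.zero_mul, Nat.zero_add, Nat.one_mul] at hw ⊢
        refine ⟨by rw [hks]; simp, by omega, by omega⟩
    refine ⟨fun s => decide (2 ^ K1 < C s 0), ⟨C, ?_, ?_⟩,
      ⟨fun s i => C s (if k s ≤ K1 then i + 2 ^ (K1 - k s) else i) - 2 ^ K1, ?_, ?_⟩⟩
    · intro s i s' i' _ _ hi hi' hne hint
      exact hprop s i s' i' trivial trivial (boundA s i hi) (boundA s' i' hi') hne hint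
    · intro s hQ i hi
      have hb := boundA s i hi
      rcases le_or_gt (k s) K1 with h | h
      · rw [min_eq_left h]
        exact hwin s trivial i hb
      · have hks : k s = K1 + 1 := by have := hk s; omega
        have hi0 : i = 0 := by
          rw [min_eq_right h.le, Nat.sub_self] at hi; simpa using hi
        subst hi0
        rw [min_eq_right h.le]
        have hw := hwin s trivial 0 hb
        have hup : ¬ (2 ^ K1 < C s 0) := by
          rcases hQ with h' | h'
          · omega
          · simpa using h'
        simp only [Nat.zero_mul, Nat.zero_add, Nat.one_mul] at hw ⊢
        omega
    · intro s i s' i' hQ hQ' hi hi' hne hint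
      beta_reduce
      obtain ⟨hJ, hlo, _⟩ := keyb s i hQ hi
      obtain ⟨hJ', hlo', _⟩ := keyb s' i' hQ' hi'
      have hne2 : s ≠ s' ∨ (if k s ≤ K1 then i + 2 ^ (K1 - k s) else i) ≠
          (if k s' ≤ K1 then i' + 2 ^ (K1 - k s') else i') := by
        rcases hne with h | h
        · exact Or.inl h
        · rcases eq_or_ne s s' with rfl | hs
          · right; split <;> omega
          · exact Or.inl hs
      have hCC := hprop s _ s' _ trivial trivial hJ hJ' hne2 hint
      generalize i * 2 ^ (min (k s) K1) = X at hlo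
      generalize i' * 2 ^ (min (k s') K1) = Y at hlo'
      omega
    · intro s hQ i hi
      beta_reduce
      obtain ⟨hJ, hlo, hhi⟩ := keyb s i hQ hi
      refine ⟨?_, ?_⟩
      · generalize i * 2 ^ (min (k s) K1) = X at hlo ⊢
        omega
      · generalize (i + 1) * 2 ^ (min (k s) K1) = X at hhi ⊢
        omega
  · rintro ⟨P, ⟨Ca, hpa, hwa⟩, ⟨Cb, hpb, hwb⟩⟩
    have key : ∀ s i, i < 2 ^ (K1 + 1 - k s) →
        ((k s < K1 + 1 ∨ P s = false) ∧ i < 2 ^ (K1 - min (k s) K1) ∧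
          (if k s ≤ K1 then
            (if i < 2 ^ (K1 - k s) then Ca s i else Cb s (i - 2 ^ (K1 - k s)) + 2 ^ K1)
          else (if P s = false then Ca s i else Cb s i + 2 ^ K1)) = Ca s i ∧
          i * 2 ^ k s ≤ i * 2 ^ (min (k s) K1) ∧
          (i + 1) * 2 ^ (min (k s) K1) ≤ (i + 1) * 2 ^ k s)
      ∨ (∃ j, (k s < K1 + 1 ∨ P s = true) ∧ j < 2 ^ (K1 - min (k s) K1) ∧
          i = j + (2 ^ (K1 + 1 - k s) - 2 ^ (K1 - min (k s) K1)) ∧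
          (if k s ≤ K1 then
            (if i < 2 ^ (K1 - k s) then Ca s i else Cb s (i - 2 ^ (K1 - k s)) + 2 ^ K1)
          else (if P s = false then Ca s i else Cb s i + 2 ^ K1)) = Cb s j + 2 ^ K1 ∧
          i * 2 ^ k s ≤ j * 2 ^ (min (k s) K1) + 2 ^ K1 ∧
          (j + 1) * 2 ^ (min (k s) K1) + 2 ^ K1 ≤ (i + 1) * 2 ^ k s) := by
      intro s i hi
      rcases le_or_gt (k s) K1 with h | h
      · rw [min_eq_left h]
        have h2 := hpow2 h
        have h1 := hpow h
        rcases lt_or_ge i (2 ^ (K1 - k s)) with hlt | hge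
        · left
          exact ⟨Or.inl (by omega), hlt, by rw [if_pos h, if_pos hlt], le_rfl, le_rfl⟩
        · right
          refine ⟨i - 2 ^ (K1 - k s), Or.inl (by omega), by omega,
            by rw [hpow2 h]; omega, by rw [if_pos h, if_neg (by omega)], ?_, ?_⟩
          · have e1 : i * 2 ^ k s = (i - 2 ^ (K1 - k s)) * 2 ^ k s + 2 ^ K1 := by
              rw [← h1, ← add_mul]; congr 1; omega
            exact le_of_eq e1
          · have e2 : (i - 2 ^ (K1 - k s) + 1) * 2 ^ k s + 2 ^ K1 = (i + 1) * 2 ^ k s := by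
              rw [← h1, ← add_mul]; congr 1; omega
            exact le_of_eq e2
      · have hks : k s = K1 + 1 := by have := hk s; omega
        have hi0 : i = 0 := by rw [hks] at hi; simpa using hi
        subst hi0
        have hmin : min (k s) K1 = K1 := min_eq_right h.le
        have hpp : 2 ^ (K1 + 1) = 2 ^ K1 + 2 ^ K1 := by rw [pow_succ]; omega
        by_cases hPs : P s = false
        · left
          refine ⟨Or.inr hPs, ?_, ?_, ?_, ?_⟩
          · rw [hmin]; simp
          · rw [if_neg (by omega), if_pos hPs]
          · simp
          · rw [hmin, hks]
            have hp1 : 0 < 2 ^ K1 := pow_pos (by norm_num) K1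
            simp only [Nat.zero_add, Nat.one_mul]; omega
        · right
          refine ⟨0, Or.inr (by revert hPs; cases P s <;> simp), ?_, ?_, ?_, ?_, ?_⟩
          · rw [hmin]; simp
          · rw [hmin, hks]; simp
          · rw [if_neg (by omega), if_neg hPs]
          · simp
          · rw [hmin, hks]
            have hp1 : 0 < 2 ^ K1 := pow_pos (by norm_num) K1
            simp only [Nat.zero_add, Nat.one_mul]; omega
    refine ⟨fun s i => if k s ≤ K1 then
        (if i < 2 ^ (K1 - k s) then Ca s i else Cb s (i - 2 ^ (K1 - k s)) + 2 ^ K1)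
      else (if P s = false then Ca s i else Cb s i + 2 ^ K1), ?_, ?_⟩
    · intro s i s' i' _ _ hi hi' hne hint
      beta_reduce
      rcases key s i hi with ⟨hQa, hib, hCe, _, _⟩ | ⟨j, hQb, hjb, hij, hCe, _, _⟩ <;>
        rcases key s' i' hi' with ⟨hQa', hib', hCe', _, _⟩ |
          ⟨j', hQb', hjb', hij', hCe', _, _⟩ <;> rw [hCe, hCe']
      · exact hpa s i s' i' hQa hQa' hib hib' hne hint
      · have h1 : Ca s i ≤ 2 ^ K1 := le_trans (hwa s hQa i hib).2 (hcap s i hib)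
        have h2 : 1 ≤ Cb s' j' :=
          le_trans (Nat.le_add_left 1 _) (hwb s' hQb' j' hjb').1
        omega
      · have h1 : Ca s' i' ≤ 2 ^ K1 := le_trans (hwa s' hQa' i' hib').2 (hcap s' i' hib')
        have h2 : 1 ≤ Cb s j :=
          le_trans (Nat.le_add_left 1 _) (hwb s hQb j hjb).1
        omega
      · have hj : s ≠ s' ∨ j ≠ j' := by
          rcases hne with h | h
          · exact Or.inl h
          · rcases eq_or_ne s s' with rfl | hs
            · right; omega
            · exact Or.inl hs
        have := hpb s j s' j' hQb hQb' hjb hjb' hj hint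
        omega
    · intro s _ i hi
      beta_reduce
      rcases key s i hi with ⟨hQa, hib, hCe, hw1, hw2⟩ |
        ⟨j, hQb, hjb, hij, hCe, hw1, hw2⟩ <;> rw [hCe]
      · obtain ⟨hw3, hw4⟩ := hwa s hQa i hib
        exact ⟨le_trans (Nat.add_le_add_right hw1 1) hw3, le_trans hw4 hw2⟩
      · obtain ⟨hw3, hw4⟩ := hwb s hQb j hjb
        refine ⟨?_, ?_⟩
        · generalize hg1 : j * 2 ^ (min (k s) K1) = B at hw1 hw3
          generalize hg2 : i * 2 ^ k s = A at hw1 ⊢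
          omega
        · generalize hg1 : (j + 1) * 2 ^ (min (k s) K1) = B at hw2 hw4
          generalize hg2 : (i + 1) * 2 ^ k s = A at hw2 ⊢
          omega
end

section
/- Combining the previous claims: for A a 0/1 matrix with the consecutive-ones property in columns and c an integer vector, there exists a 0/1 vector x with Ax ≤ c and A(1−x) ≤ c if and only if A·1 ≤ 2c. -/
/-!
The forward direction is the sum of the two inequalities. Conversely, column `j` of `A` is
the indicator of an interval of rows, and every finite family of intervals can be split into a
red and a blue part such that at every point the numbers of red and blue intervals covering it
differ by at most one. Taking `x` to be the indicator of the red columns, a row covered by `r` red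
and `r'` blue intervals has `r + r' ≤ 2 c` and `|r - r'| ≤ 1`, hence `r, r' ≤ c`.

The split is built by induction on the total length of the intervals `[a j, b j)`. Empty
intervals are discarded. Let `m` be the smallest left endpoint. If two intervals `[m, b)` and
`[m, b')` with `b ≤ b'` start there, replace them by `[b, b')`, colour `[m, b')` like `[b, b')` and
`[m, b)` the other way: the two cancel on `[m, b)`. If only one interval starts at `m`, it alone
covers `m`, so it may be shortened to `[m + 1, b)`.
-/

open Finset Function

variable {ι : Type*}

section

variable {a a' b : ι → ℕ} {T : Finset ι} {j k : ι} {t : ℕ}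

def coverCount (a b : ι → ℕ) (s : Finset ι) (t : ℕ) : ℕ :=
  ∑ j ∈ s, if a j ≤ t ∧ t < b j then 1 else 0

lemma coverCount_congr_left (h : ∀ i ∈ T, (a i ≤ t ↔ a' i ≤ t)) :
    coverCount a b T t = coverCount a' b T t :=
  sum_congr rfl fun i hi => by simp only [h i hi]

end

variable [DecidableEq ι]

def IsBalancedSplit (a b : ι → ℕ) (s S : Finset ι) : Prop :=
  ∀ t, coverCount a b S t ≤ coverCount a b (s \ S) t + 1 ∧
    coverCount a b (s \ S) t ≤ coverCount a b S t + 1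

section

variable {a a' b : ι → ℕ} {s S T : Finset ι} {j k : ι} {t : ℕ}

lemma coverCount_eq_add_erase (hk : k ∈ T) :
    coverCount a b T t = (if a k ≤ t ∧ t < b k then 1 else 0) + coverCount a b (T.erase k) t :=
  (add_sum_erase T _ hk).symm

lemma coverCount_insert (hk : k ∉ T) :
    coverCount a b (insert k T) t = (if a k ≤ t ∧ t < b k then 1 else 0) + coverCount a b T t :=
  sum_insert hk

lemma coverCount_le_one_of_forall_ne (hT : ∀ i ∈ T, i ≠ j → ¬(a i ≤ t ∧ t < b i)) :
    coverCount a b T t ≤ 1 :=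
  calc coverCount a b T t ≤ ∑ i ∈ T, if j = i then 1 else 0 :=
        sum_le_sum fun i hi => by
          rcases eq_or_ne j i with rfl | hji
          · simp only [if_true]; split_ifs <;> simp
          · rw [if_neg (hT i hi hji.symm), if_neg hji]
    _ ≤ 1 := by rw [sum_ite_eq]; split_ifs <;> simp

lemma coverCount_sdiff_add (hS : S ⊆ s) :
    coverCount a b (s \ S) t + coverCount a b S t = coverCount a b s t :=
  sum_sdiff hS

lemma sdiff_eq_insert_erase_sdiff (hj : j ∈ s) (hjS : j ∉ S) :
    s \ S = insert j (s.erase j \ S) := by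
  rw [erase_sdiff_comm, insert_erase (mem_sdiff.2 ⟨hj, hjS⟩)]

lemma IsBalancedSplit.sdiff (h : IsBalancedSplit a b s S) (hS : S ⊆ s) :
    IsBalancedSplit a b s (s \ S) := by
  intro t
  rw [Finset.sdiff_sdiff_eq_self hS]
  exact (h t).symm

lemma IsBalancedSplit.of_erase (hj : j ∈ s) (hba : b j ≤ a j) (hS : S ⊆ s.erase j)
    (h : IsBalancedSplit a b (s.erase j) S) : IsBalancedSplit a b s S := by
  intro t
  rw [sdiff_eq_insert_erase_sdiff hj fun hjS => by simpa using hS hjS,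
    coverCount_insert (by simp), if_neg (by omega), zero_add]
  exact h t

lemma IsBalancedSplit.of_merge (hj : j ∈ s) (ha : a k = a j) (hab : a j ≤ b j)
    (hb : b j ≤ b k) (hk : k ∈ S) (hS : S ⊆ s.erase j)
    (h : IsBalancedSplit (update a k (b j)) b (s.erase j) S) : IsBalancedSplit a b s S := by
  intro t
  have hjS : j ∉ S := fun hjS => by simpa using hS hjS
  have hkS' : k ∉ s.erase j \ S := fun h' => (mem_sdiff.1 h').2 hk
  have hfar : ∀ T, k ∉ T → coverCount (update a k (b j)) b T t = coverCount a b T t :=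
    fun T hkT => coverCount_congr_left fun i hi => by rw [update_of_ne (ne_of_mem_of_not_mem hi hkT)]
  have hred : coverCount a b S t =
      (if a j ≤ t ∧ t < b j then 1 else 0) + coverCount (update a k (b j)) b S t := by
    rw [coverCount_eq_add_erase hk, coverCount_eq_add_erase (a := update a k (b j)) hk,
      hfar _ (notMem_erase k S), update_self]
    split_ifs <;> omega
  have hblue : coverCount a b (s \ S) t =
      (if a j ≤ t ∧ t < b j then 1 else 0) + coverCount (update a k (b j)) b (s.erase j \ S) t := by
    rw [sdiff_eq_insert_erase_sdiff hj hjS, coverCount_insert (by simp), hfar _ hkS']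
  rw [hred, hblue]
  have := h t
  omega

lemma IsBalancedSplit.of_update_succ (hj : j ∈ s) (hab : a j < b j)
    (hmin : ∀ k ∈ s, k ≠ j → a j < a k) (hS : S ⊆ s)
    (h : IsBalancedSplit (update a j (a j + 1)) b s S) : IsBalancedSplit a b s S := by
  intro t
  by_cases ht : t = a j
  · subst ht
    have hle : ∀ T ⊆ s, coverCount a b T (a j) ≤ 1 := fun T hT =>
      coverCount_le_one_of_forall_ne fun i hi hij => by have := hmin i (hT hi) hij; omega
    have := hle S hS
    have := hle (s \ S) sdiff_subset
    omega
  · have hshift : ∀ T, coverCount (update a j (a j + 1)) b T t = coverCount a b T t :=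
      fun T => coverCount_congr_left fun i _ => by
        rcases eq_or_ne i j with rfl | hij
        · rw [update_self]; omega
        · rw [update_of_ne hij]
    rw [← hshift, ← hshift]
    exact h t

lemma IsBalancedSplit.coverCount_le (h : IsBalancedSplit a b s S) (hS : S ⊆ s) {c : ℤ}
    (hc : (coverCount a b s t : ℤ) ≤ c + c) :
    (coverCount a b S t : ℤ) ≤ c ∧ (coverCount a b (s \ S) t : ℤ) ≤ c := by
  have := h t
  have := coverCount_sdiff_add hS (a := a) (b := b) (t := t)
  omega

lemma IsBalancedSplit.exists_mem (h : ∃ S ⊆ s, IsBalancedSplit a b s S) (hk : k ∈ s) :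
    ∃ S ⊆ s, k ∈ S ∧ IsBalancedSplit a b s S := by
  obtain ⟨S, hS, h⟩ := h
  by_cases hkS : k ∈ S
  · exact ⟨S, hS, hkS, h⟩
  · exact ⟨s \ S, sdiff_subset, mem_sdiff.2 ⟨hk, hkS⟩, h.sdiff hS⟩

end

theorem exists_isBalancedSplit (a b : ι → ℕ) (s : Finset ι) :
    ∃ S ⊆ s, IsBalancedSplit a b s S := by
  induction hn : ∑ j ∈ s, (b j - a j + 1) using Nat.strong_induction_on generalizing a s with
  | _ n ih =>
  subst hn
  by_cases hempty : ∃ j ∈ s, b j ≤ a j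
  · obtain ⟨j, hj, hba⟩ := hempty
    obtain ⟨S, hS, h⟩ := ih _ (sum_erase_lt_of_pos hj (by omega)) a (s.erase j) rfl
    exact ⟨S, hS.trans (erase_subset _ _), h.of_erase hj hba hS⟩
  push Not at hempty
  obtain rfl | hne := s.eq_empty_or_nonempty
  · exact ⟨∅, subset_refl _, fun t => by simp [coverCount]⟩
  obtain ⟨j, hj, hmin⟩ := exists_min_image s (fun j => toLex (a j, b j)) hne
  simp only [Prod.Lex.toLex_le_toLex'] at hmin
  by_cases hdup : ∃ k ∈ s, k ≠ j ∧ a k = a j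
  · obtain ⟨k, hk, hkj, hak⟩ := hdup
    have hb : b j ≤ b k := (hmin k hk).2 hak.symm
    have hlt : ∑ i ∈ s.erase j, (b i - update a k (b j) i + 1) < ∑ i ∈ s, (b i - a i + 1) := by
      refine (sum_le_sum fun i _ => ?_).trans_lt (sum_erase_lt_of_pos hj (by omega))
      rcases eq_or_ne i k with rfl | hik
      · rw [update_self]; have := hempty j hj; omega
      · rw [update_of_ne hik]
    obtain ⟨S, hS, hkS, h⟩ := IsBalancedSplit.exists_mem
      (ih _ hlt (update a k (b j)) (s.erase j) rfl) (mem_erase.2 ⟨hkj, hk⟩)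
    exact ⟨S, hS.trans (erase_subset _ _), h.of_merge hj hak (hempty j hj).le hb hkS hS⟩
  · push Not at hdup
    have hstrict : ∀ k ∈ s, k ≠ j → a j < a k :=
      fun k hk hkj => lt_of_le_of_ne (hmin k hk).1 (hdup k hk hkj).symm
    have hlt : ∑ i ∈ s, (b i - update a j (a j + 1) i + 1) < ∑ i ∈ s, (b i - a i + 1) := by
      refine sum_lt_sum (fun i hi => ?_) ⟨j, hj, ?_⟩
      · rcases eq_or_ne i j with rfl | hij
        · rw [update_self]; omega
        · rw [update_of_ne hij]
      · have := hempty j hj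
        rw [update_self]; omega
    obtain ⟨S, hS, h⟩ := ih _ hlt (update a j (a j + 1)) s rfl
    exact ⟨S, hS, h.of_update_succ hj (hempty j hj) hstrict hS⟩

def intervalMatrix (p : ℕ) (a b : ι → ℕ) : Matrix (Fin p) ι ℤ :=
  Matrix.of fun i j => if a j ≤ i.1 ∧ i.1 < b j then 1 else 0

lemma intervalMatrix_mulVec_indicator [Fintype ι] (p : ℕ) (a b : ι → ℕ) (T : Finset ι)
    (i : Fin p) :
    (intervalMatrix p a b).mulVec (fun j => if j ∈ T then 1 else 0) i = coverCount a b T i := by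
  simp [intervalMatrix, Matrix.mulVec, dotProduct, coverCount, Finset.sum_ite_mem]

theorem stmt10 (p q : ℕ) (A : Matrix (Fin p) (Fin q) ℤ) (c : Fin p → ℤ)
    (h01 : ∀ i j, A i j = 0 ∨ A i j = 1)
    (hcons : ∀ j : Fin q, ∃ aj bj : ℕ, aj ≤ bj ∧
      ∀ i : Fin p, A i j = 1 ↔ (aj ≤ i.1 ∧ i.1 ≤ bj)) :
    (∃ x : Fin q → ℤ, (∀ j, x j = 0 ∨ x j = 1) ∧
      A.mulVec x ≤ c ∧ A.mulVec (1 - x) ≤ c) ↔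
      A.mulVec 1 ≤ 2 • c := by
  constructor
  · rintro ⟨x, -, hx, hx'⟩
    rw [two_smul, ← add_sub_cancel x 1, Matrix.mulVec_add]
    exact add_le_add hx hx'
  · intro h2c
    choose a b _ hA1 using hcons
    have hA : A = intervalMatrix p a (fun j => b j + 1) := by
      ext i j
      have := hA1 j i
      rcases h01 i j with h | h <;> simp [intervalMatrix, h] at this ⊢ <;> omega
    obtain ⟨S, -, hS⟩ := exists_isBalancedSplit a (fun j => b j + 1) univ
    have hcount (T : Finset (Fin q)) (i : Fin p) :
        A.mulVec (fun j => if j ∈ T then 1 else 0) i = coverCount a (fun j => b j + 1) T i := by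
      rw [hA, intervalMatrix_mulVec_indicator]
    have hrow (i : Fin p) := hS.coverCount_le (subset_univ S) (t := i) (c := c i) <| by
      rw [← hcount, show (fun j => if j ∈ univ then 1 else 0) = (1 : Fin q → ℤ) by ext; simp]
      exact two_smul ℤ (c i) ▸ h2c i
    have hcompl : (1 : Fin q → ℤ) - (fun j => if j ∈ S then 1 else 0) =
        fun j => if j ∈ univ \ S then 1 else 0 := by
      ext j; by_cases hj : j ∈ S <;> simp [hj]
    refine ⟨fun j => if j ∈ S then 1 else 0, fun j => by by_cases hj : j ∈ S <;> simp [hj],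
      fun i => (hcount S i).trans_le (hrow i).1, fun i => ?_⟩
    rw [hcompl, hcount]
    exact (hrow i).2
end

section
/- Given a good 2^{k*}-coloring C of G*_S with k* ≥ 1, define the partition S^a_{k*} = {s ∈ S_{k*} : C(v_s^1) ≤ 2^{k*−1}} and S^b_{k*} = {s ∈ S_{k*} : C(v_s^1) > 2^{k*−1}}, and define C^a(v_s^i) = C(v_s^i) for copies colored in [1, 2^{k*−1}], and C^b(v_s^i) = C(v_s^{i + 2^{k*−1}/p_s}) − 2^{k*−1} for streams of period p_s ≤ 2^{k*−1} (and C^b(v_s^1) = C(v_s^1) − 2^{k*−1} for s ∈ S^b_{k*}). Then C^a and C^b are good 2^{k*−1}-colorings of G*_{S^a} and G*_{S^b}, respectively; in particular, for s with p_s ≤ 2^{k*−1} and 1 ≤ i ≤ 2^{k*−1}/p_s, the value C(v_s^{i + 2^{k*−1}/p_s}) − 2^{k*−1} lies in [(i−1)p_s + 1, i·p_s]. -/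
theorem stmt14 (S : Type) [Fintype S] (kstar : ℕ) (hk1 : 1 ≤ kstar)
    (a b k : S → ℕ) (hab : ∀ s, 1 ≤ a s ∧ a s < b s) (hk : ∀ s, k s ≤ kstar)
    (C : S → ℕ → ℕ) (hC : GoodOn a b k kstar (fun _ => True) C) :
    GoodOn a b (fun s => min (k s) (kstar - 1)) (kstar - 1)
        (fun s => k s < kstar ∨ C s 0 ≤ 2 ^ (kstar - 1))
        (fun s i => C s i)
    ∧ GoodOn a b (fun s => min (k s) (kstar - 1)) (kstar - 1)
        (fun s => k s < kstar ∨ 2 ^ (kstar - 1) < C s 0)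
        (fun s i => if k s < kstar then C s (i + 2 ^ (kstar - 1 - k s)) - 2 ^ (kstar - 1)
                    else C s 0 - 2 ^ (kstar - 1))
    ∧ ∀ s, k s ≤ kstar - 1 → ∀ i, i < 2 ^ (kstar - 1 - k s) →
        i * 2 ^ k s + 1 ≤ C s (i + 2 ^ (kstar - 1 - k s)) - 2 ^ (kstar - 1)
        ∧ C s (i + 2 ^ (kstar - 1 - k s)) - 2 ^ (kstar - 1) ≤ (i + 1) * 2 ^ k s := by
  obtain ⟨hCp, hCw⟩ := hC
  have hwin : ∀ s i, i < 2 ^ (kstar - k s) →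
      i * 2 ^ k s + 1 ≤ C s i ∧ C s i ≤ (i + 1) * 2 ^ k s :=
    fun s i hi => hCw s trivial i hi
  -- pow split
  have hpow : ∀ s, k s < kstar →
      2 ^ (kstar - k s) = 2 ^ (kstar - 1 - k s) + 2 ^ (kstar - 1 - k s) := by
    intro s hs
    have h1 : kstar - k s = (kstar - 1 - k s) + 1 := by omega
    rw [h1, pow_succ]; ring
  have hmul : ∀ s, k s < kstar → 2 ^ (kstar - 1 - k s) * 2 ^ k s = 2 ^ (kstar - 1) := by
    intro s hs
    rw [← pow_add]
    congr 1; omega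
  -- index bound transfer for the `a` part
  have bound : ∀ s i, i < 2 ^ (kstar - 1 - min (k s) (kstar - 1)) → i < 2 ^ (kstar - k s) := by
    intro s i hi
    by_cases h : k s < kstar
    · have hm : min (k s) (kstar - 1) = k s := by omega
      rw [hm] at hi
      calc i < 2 ^ (kstar - 1 - k s) := hi
        _ ≤ 2 ^ (kstar - k s) := Nat.pow_le_pow_right (by norm_num) (by omega)
    · have hks : k s = kstar := le_antisymm (hk s) (by omega)
      have hm : min (k s) (kstar - 1) = kstar - 1 := by omega
      rw [hm, Nat.sub_self] at hi
      rw [hks, Nat.sub_self]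
      simpa using hi
  -- effective index for the `b` part
  set J : S → ℕ → ℕ := fun s i => if k s < kstar then i + 2 ^ (kstar - 1 - k s) else 0 with hJ
  have boundJ : ∀ s i, i < 2 ^ (kstar - 1 - min (k s) (kstar - 1)) →
      J s i < 2 ^ (kstar - k s) := by
    intro s i hi
    by_cases h : k s < kstar
    · have hm : min (k s) (kstar - 1) = k s := by omega
      rw [hm] at hi
      simp only [hJ, if_pos h]
      rw [hpow s h]; omega
    · have hks : k s = kstar := le_antisymm (hk s) (by omega)
      simp only [hJ, if_neg h, hks, Nat.sub_self]
      norm_num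
  have bigJ : ∀ s i, (k s < kstar ∨ 2 ^ (kstar - 1) < C s 0) →
      i < 2 ^ (kstar - 1 - min (k s) (kstar - 1)) → 2 ^ (kstar - 1) < C s (J s i) := by
    intro s i hQ hi
    by_cases h : k s < kstar
    · have hm : min (k s) (kstar - 1) = k s := by omega
      rw [hm] at hi
      simp only [hJ, if_pos h]
      have hlt : i + 2 ^ (kstar - 1 - k s) < 2 ^ (kstar - k s) := by rw [hpow s h]; omega
      have := (hwin s (i + 2 ^ (kstar - 1 - k s)) hlt).1
      have hm' := hmul s h
      nlinarith [Nat.one_le_two_pow (n := k s), Nat.zero_le (i * 2 ^ k s)]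
    · have hQ' : 2 ^ (kstar - 1) < C s 0 := hQ.resolve_left h
      simpa only [hJ, if_neg h] using hQ'
  -- main window claim for the `b` part (shared with part 3)
  have winb : ∀ s, k s < kstar → ∀ i, i < 2 ^ (kstar - 1 - k s) →
      i * 2 ^ k s + 1 ≤ C s (i + 2 ^ (kstar - 1 - k s)) - 2 ^ (kstar - 1)
      ∧ C s (i + 2 ^ (kstar - 1 - k s)) - 2 ^ (kstar - 1) ≤ (i + 1) * 2 ^ k s := by
    intro s h i hi
    have hlt : i + 2 ^ (kstar - 1 - k s) < 2 ^ (kstar - k s) := by rw [hpow s h]; omega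
    obtain ⟨h1, h2⟩ := hwin s (i + 2 ^ (kstar - 1 - k s)) hlt
    have hm' := hmul s h
    have e1 : (i + 2 ^ (kstar - 1 - k s)) * 2 ^ k s = i * 2 ^ k s + 2 ^ (kstar - 1) := by
      rw [add_mul, hm']
    have e2 : (i + 2 ^ (kstar - 1 - k s) + 1) * 2 ^ k s
        = (i + 1) * 2 ^ k s + 2 ^ (kstar - 1) := by
      rw [show i + 2 ^ (kstar - 1 - k s) + 1 = (i + 1) + 2 ^ (kstar - 1 - k s) by ring,
        add_mul, hm']
    omega
  refine ⟨⟨?_, ?_⟩, ⟨?_, ?_⟩, ?_⟩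
  · -- properness of Cᵃ
    intro s i s' i' hQ hQ' hi hi' hne hint
    exact hCp s i s' i' trivial trivial (bound s i hi) (bound s' i' hi') hne hint
  · -- window of Cᵃ
    intro s hQ i hi
    by_cases h : k s < kstar
    · have hm : min (k s) (kstar - 1) = k s := by omega
      simp only [hm] at hi ⊢
      exact hwin s i (bound s i (by rwa [hm]))
    · have hks : k s = kstar := le_antisymm (hk s) (by omega)
      have hm : min (k s) (kstar - 1) = kstar - 1 := by omega
      simp only [hm, Nat.sub_self, pow_zero, Nat.lt_one_iff] at hi
      subst hi
      have h0 : (0 : ℕ) < 2 ^ (kstar - k s) := by positivity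
      obtain ⟨h1, h2⟩ := hwin s 0 h0
      have hQ' : C s 0 ≤ 2 ^ (kstar - 1) := hQ.resolve_left h
      simp only [hm]
      omega
  · -- properness of Cᵇ
    intro s i s' i' hQ hQ' hi hi' hne hint
    have hb := bigJ s i hQ hi
    have hb' := bigJ s' i' hQ' hi'
    have hneJ : s ≠ s' ∨ J s i ≠ J s' i' := by
      rcases hne with h | h
      · exact Or.inl h
      · rcases eq_or_ne s s' with rfl | hs
        · refine Or.inr ?_
          by_cases hks : k s < kstar
          · simp only [hJ, if_pos hks]; omega
          · have hks' : k s = kstar := le_antisymm (hk s) (by omega)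
            have hm : min (k s) (kstar - 1) = kstar - 1 := by omega
            simp only [hm, Nat.sub_self, pow_zero, Nat.lt_one_iff] at hi hi'
            omega
        · exact Or.inl hs
    have hneC : C s (J s i) ≠ C s' (J s' i') :=
      hCp s (J s i) s' (J s' i') trivial trivial (boundJ s i hi) (boundJ s' i' hi') hneJ hint
    by_cases h : k s < kstar <;> by_cases h' : k s' < kstar <;>
      simp only [hJ, if_pos, if_neg, h, h', if_true, if_false] at hb hb' hneC ⊢ <;>
      omega
  · -- window of Cᵇ
    intro s hQ i hi
    by_cases h : k s < kstar
    · have hm : min (k s) (kstar - 1) = k s := by omega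
      simp only [hm] at hi ⊢
      simp only [if_pos h]
      exact winb s h i hi
    · have hks : k s = kstar := le_antisymm (hk s) (by omega)
      have hm : min (k s) (kstar - 1) = kstar - 1 := by omega
      simp only [hm, Nat.sub_self, pow_zero, Nat.lt_one_iff] at hi
      subst hi
      have h0 : (0 : ℕ) < 2 ^ (kstar - k s) := by positivity
      obtain ⟨h1, h2⟩ := hwin s 0 h0
      have hQ' : 2 ^ (kstar - 1) < C s 0 := hQ.resolve_left h
      have h2' : C s 0 ≤ 2 ^ (kstar - 1) + 2 ^ (kstar - 1) := by
        calc C s 0 ≤ (0 + 1) * 2 ^ k s := h2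
          _ = 2 ^ kstar := by rw [hks]; ring
          _ = 2 ^ (kstar - 1) + 2 ^ (kstar - 1) := by
              conv_lhs => rw [show kstar = kstar - 1 + 1 by omega]
              rw [pow_succ]; ring
      simp only [if_neg h, hm]
      omega
  · -- part 3
    intro s hks i hi
    exact winb s (by omega) i hi
end
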